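/- arXiv:1507.03873 — 2 statements merged into one kernel-verified Lean document; each statement's English description precedes it below -/
import Mathlib

section
/- Let X : ℝ → ℝ² be a twice continuously differentiable curve with ‖X'(s)‖ = 1 for all s, let a < b and r > 0, and suppose that the normal map Φ(s,t) = X(s) + t·R(X'(s)) is injective on [a,b] × (−r, r), that b − a ≤ 2r, and that the chord length satisfies ‖X(b) − X(a)‖ ≤ r. Then the arc length of the curve segment is at most twice the chord length: b − a ≤ 2·‖X(b) − X(a)‖. (Lemma B.1 of the paper: a curve segment whose chord has length at most the tubular radius r has arc length at most twice its chord length.) -/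
/-- Rotation by 90 degrees in the Euclidean plane: `R(a₁, a₂) = (-a₂, a₁)`. -/
noncomputable def rot (a : EuclideanSpace ℝ (Fin 2)) : EuclideanSpace ℝ (Fin 2) :=
  (WithLp.equiv 2 (Fin 2 → ℝ)).symm ![-a 1, a 0]

/-!
Injectivity of the normal map bounds the curvature: if `|κ(s)| > 1/r` at some `s ∈ [a, b]`, the
normal lines at `X s` and at a nearby `X y` meet close to the centre of curvature, at parameter
about `1/κ(s)` on both lines, hence inside the tube, contradicting injectivity. So the unit
tangent is `(1/r)`-Lipschitz on `[a, b]`, and for the midpoint `m` we get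
`‖X'(s) - X'(m)‖ ≤ |s - m| / r ≤ 1`, i.e. `⟪X'(s), X'(m)⟫ ≥ 1/2`. Integrating over `[a, b]` gives
`(b - a) / 2 ≤ ⟪X b - X a, X'(m)⟫ ≤ ‖X b - X a‖`.
-/

open Set Filter Topology
open scoped RealInnerProductSpace

local notation "ℝ²" => EuclideanSpace ℝ (Fin 2)

@[simp] lemma rot_apply_zero (u : ℝ²) : rot u 0 = -u 1 := by simp [rot]

@[simp] lemma rot_apply_one (u : ℝ²) : rot u 1 = u 0 := by simp [rot]

lemma inner_fin_two (u v : ℝ²) : ⟪u, v⟫ = u 0 * v 0 + u 1 * v 1 := by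
  simp [PiLp.inner_apply, Fin.sum_univ_two, mul_comm]

lemma norm_sq_fin_two (u : ℝ²) : ‖u‖ ^ 2 = u 0 ^ 2 + u 1 ^ 2 := by
  simp [EuclideanSpace.real_norm_sq_eq, Fin.sum_univ_two]

lemma inner_rot_sq_add_inner_sq (u v : ℝ²) :
    ⟪rot u, v⟫ ^ 2 + ⟪u, v⟫ ^ 2 = ‖u‖ ^ 2 * ‖v‖ ^ 2 := by
  simp only [inner_fin_two, norm_sq_fin_two, rot_apply_zero, rot_apply_one]
  ring

lemma inner_rot_self (u : ℝ²) : ⟪rot u, u⟫ = 0 := by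
  rw [inner_fin_two, rot_apply_zero, rot_apply_one]
  ring

lemma abs_inner_rot_eq_norm {u v : ℝ²} (hu : ‖u‖ = 1) (huv : ⟪u, v⟫ = 0) :
    |⟪rot u, v⟫| = ‖v‖ := by
  have h := inner_rot_sq_add_inner_sq u v
  rw [huv, hu] at h
  rw [← sq_eq_sq₀ (abs_nonneg _) (norm_nonneg _), sq_abs]
  linarith

/-- Cramer's rule for the intersection of two lines with normal directions `u₁`, `u₂`. -/
lemma add_smul_rot_eq_add_smul_rot (p₁ p₂ u₁ u₂ : ℝ²) (h : ⟪rot u₁, u₂⟫ ≠ 0) :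
    p₁ + (⟪u₂, p₂ - p₁⟫ / ⟪rot u₁, u₂⟫) • rot u₁ =
      p₂ + (⟪u₁, p₂ - p₁⟫ / ⟪rot u₁, u₂⟫) • rot u₂ := by
  set D := ⟪rot u₁, u₂⟫ with hD
  rw [inner_fin_two, rot_apply_zero, rot_apply_one] at hD
  ext i
  fin_cases i <;>
  · simp only [inner_fin_two, PiLp.sub_apply, PiLp.add_apply, PiLp.smul_apply, Fin.zero_eta,
      Fin.mk_one, Fin.isValue, rot_apply_zero, rot_apply_one, smul_eq_mul, mul_neg]
    field_simp
    rw [hD]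
    ring

lemma tendsto_div_nhdsNE_of_hasDerivAt {f g : ℝ → ℝ} {f' g' x : ℝ} (hf : HasDerivAt f f' x)
    (hg : HasDerivAt g g' x) (hfx : f x = 0) (hgx : g x = 0) (hg' : g' ≠ 0) :
    Tendsto (fun y => f y / g y) (𝓝[≠] x) (𝓝 (f' / g')) := by
  refine ((hasDerivAt_iff_tendsto_slope.mp hf).div (hasDerivAt_iff_tendsto_slope.mp hg)
    hg').congr' ?_
  filter_upwards [self_mem_nhdsWithin] with y hy
  simp only [Pi.div_apply, slope_def_field, hfx, hgx, sub_zero]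
  exact div_div_div_cancel_right₀ (sub_ne_zero.mpr hy) _ _

lemma frequently_nhdsNE_mem_Icc {a b s : ℝ} (hab : a < b) (hs : s ∈ Icc a b) :
    ∃ᶠ y in 𝓝[≠] s, y ∈ Icc a b := by
  rcases hs.2.lt_or_eq with hsb | rfl
  · have h : ∀ᶠ y in 𝓝[>] s, y ∈ Icc a b :=
      mem_of_superset (Ioo_mem_nhdsGT hsb) fun y hy => ⟨hs.1.trans hy.1.le, hy.2.le⟩
    exact h.frequently.filter_mono (nhdsWithin_mono _ fun y hy => ne_of_gt hy)
  · have h : ∀ᶠ y in 𝓝[<] s, y ∈ Icc a s :=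
      mem_of_superset (Ioo_mem_nhdsLT hab) fun y hy => ⟨hy.1.le, hy.2.le⟩
    exact h.frequently.filter_mono (nhdsWithin_mono _ fun y hy => ne_of_lt hy)

lemma half_le_inner_of_norm_sub_le_one {E : Type*} [NormedAddCommGroup E]
    [InnerProductSpace ℝ E] {u v : E} (hu : ‖u‖ = 1) (hv : ‖v‖ = 1) (h : ‖u - v‖ ≤ 1) :
    1 / 2 ≤ ⟪u, v⟫ := by
  have := norm_sub_sq_real u v
  rw [hu, hv] at this
  nlinarith [norm_nonneg (u - v)]

lemma mul_sub_le_norm_sub_of_le_inner_deriv {E : Type*} [NormedAddCommGroup E]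
    [InnerProductSpace ℝ E] {f : ℝ → E} {u : E} {a b c : ℝ} (hf : Differentiable ℝ f)
    (hu : ‖u‖ ≤ 1) (hab : a ≤ b) (h : ∀ s ∈ Icc a b, c ≤ ⟪deriv f s, u⟫) :
    c * (b - a) ≤ ‖f b - f a‖ := by
  have hderiv : ∀ s, HasDerivAt (fun s => ⟪f s, u⟫) ⟪deriv f s, u⟫ s := fun s => by
    simpa using (hf s).hasDerivAt.inner ℝ (hasDerivAt_const s u)
  calc c * (b - a) ≤ ⟪f b, u⟫ - ⟪f a, u⟫ :=
        (convex_Icc a b).mul_sub_le_image_sub_of_le_deriv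
          (fun s _ => (hderiv s).continuousAt.continuousWithinAt)
          (fun s _ => (hderiv s).differentiableAt.differentiableWithinAt)
          (fun s hs => (hderiv s).deriv ▸ h s (interior_subset hs))
          a (left_mem_Icc.mpr hab) b (right_mem_Icc.mpr hab) hab
    _ = ⟪f b - f a, u⟫ := (inner_sub_left _ _ _).symm
    _ ≤ ‖f b - f a‖ * ‖u‖ := real_inner_le_norm _ _
    _ ≤ ‖f b - f a‖ := mul_le_of_le_one_right (norm_nonneg _) hu

noncomputable def curvature (X : ℝ → ℝ²) (s : ℝ) : ℝ :=
  ⟪rot (deriv X s), deriv (deriv X) s⟫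

section UnitSpeedCurve

variable {X : ℝ → ℝ²}

lemma hasDerivAt_deriv_deriv (hX : ContDiff ℝ 2 X) (s : ℝ) :
    HasDerivAt (deriv X) (deriv (deriv X) s) s :=
  ((hX.deriv' (n := 1)).differentiable one_ne_zero s).hasDerivAt

lemma inner_deriv_deriv_deriv_eq_zero (hX : ContDiff ℝ 2 X) (hunit : ∀ s, ‖deriv X s‖ = 1)
    (s : ℝ) : ⟪deriv X s, deriv (deriv X) s⟫ = 0 := by
  have hconst : (fun u => ⟪deriv X u, deriv X u⟫) = fun _ => 1 := by
    ext u
    rw [real_inner_self_eq_norm_sq, hunit, one_pow]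
  have h := (hasDerivAt_deriv_deriv hX s).inner ℝ (hasDerivAt_deriv_deriv hX s)
  rw [hconst, real_inner_comm (deriv X s) (deriv (deriv X) s)] at h
  linarith [h.unique (hasDerivAt_const s (1 : ℝ))]

lemma norm_deriv_deriv_eq_abs_curvature (hX : ContDiff ℝ 2 X) (hunit : ∀ s, ‖deriv X s‖ = 1)
    (s : ℝ) : ‖deriv (deriv X) s‖ = |curvature X s| :=
  (abs_inner_rot_eq_norm (hunit s) (inner_deriv_deriv_deriv_eq_zero hX hunit s)).symm

lemma hasDerivAt_inner_rot_deriv (hX : ContDiff ℝ 2 X) (s : ℝ) :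
    HasDerivAt (fun y => ⟪rot (deriv X s), deriv X y⟫) (curvature X s) s := by
  simpa [curvature] using (hasDerivAt_const s (rot (deriv X s))).inner ℝ
    (hasDerivAt_deriv_deriv hX s)

lemma tendsto_normal_intersection_params (hX : ContDiff ℝ 2 X) (hunit : ∀ s, ‖deriv X s‖ = 1)
    {s : ℝ} (hκ : curvature X s ≠ 0) :
    Tendsto (fun y => ⟪deriv X y, X y - X s⟫ / ⟪rot (deriv X s), deriv X y⟫) (𝓝[≠] s)
        (𝓝 (curvature X s)⁻¹) ∧
      Tendsto (fun y => ⟪deriv X s, X y - X s⟫ / ⟪rot (deriv X s), deriv X y⟫) (𝓝[≠] s)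
        (𝓝 (curvature X s)⁻¹) := by
  have hX' : HasDerivAt (fun y => X y - X s) (deriv X s) s :=
    (hX.differentiable two_ne_zero s).hasDerivAt.sub_const (X s)
  have hnum₁ : HasDerivAt (fun y => ⟪deriv X y, X y - X s⟫) 1 s := by
    simpa [hunit] using (hasDerivAt_deriv_deriv hX s).inner ℝ hX'
  have hnum₂ : HasDerivAt (fun y => ⟪deriv X s, X y - X s⟫) 1 s := by
    simpa [hunit] using (hasDerivAt_const s (deriv X s)).inner ℝ hX'
  have hden := hasDerivAt_inner_rot_deriv hX s
  rw [inv_eq_one_div]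
  exact ⟨tendsto_div_nhdsNE_of_hasDerivAt hnum₁ hden (by simp) (inner_rot_self _) hκ,
    tendsto_div_nhdsNE_of_hasDerivAt hnum₂ hden (by simp) (inner_rot_self _) hκ⟩

lemma mul_abs_curvature_le_one (hX : ContDiff ℝ 2 X) (hunit : ∀ s, ‖deriv X s‖ = 1)
    {a b r : ℝ} (hab : a < b)
    (hinj : InjOn (fun p : ℝ × ℝ => X p.1 + p.2 • rot (deriv X p.1)) (Icc a b ×ˢ Ioo (-r) r))
    {s : ℝ} (hs : s ∈ Icc a b) : r * |curvature X s| ≤ 1 := by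
  by_contra! hlt
  have hκ : curvature X s ≠ 0 := by
    rintro h
    rw [h, abs_zero, mul_zero] at hlt
    linarith
  have habs : |(curvature X s)⁻¹| < r := by
    rw [abs_inv, inv_lt_iff_one_lt_mul₀ (abs_pos.mpr hκ)]
    exact hlt
  have hmem : Ioo (-r) r ∈ 𝓝 (curvature X s)⁻¹ :=
    Ioo_mem_nhds (abs_lt.mp habs).1 (abs_lt.mp habs).2
  obtain ⟨ht₁, ht₂⟩ := tendsto_normal_intersection_params hX hunit hκ
  obtain ⟨y, hy, hys, ht₁y, ht₂y, hden⟩ :=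
    ((frequently_nhdsNE_mem_Icc hab hs).and_eventually
      ((eventually_mem_nhdsWithin (a := s)).and ((ht₁.eventually hmem).and
        ((ht₂.eventually hmem).and ((hasDerivAt_inner_rot_deriv hX s).eventually_ne hκ))))).exists
  exact hys (congrArg Prod.fst
    (hinj (mk_mem_prod hs ht₁y) (mk_mem_prod hy ht₂y)
      (add_smul_rot_eq_add_smul_rot _ _ _ _ hden))).symm

end UnitSpeedCurve

theorem stmt5_general (X : ℝ → EuclideanSpace ℝ (Fin 2))
    (hX : ContDiff ℝ 2 X) (hunit : ∀ s : ℝ, ‖deriv X s‖ = 1)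
    (a b r : ℝ) (hab : a < b) (hr : 0 < r)
    (hinj : Set.InjOn (fun p : ℝ × ℝ => X p.1 + p.2 • rot (deriv X p.1))
      (Set.Icc a b ×ˢ Set.Ioo (-r) r))
    (hlen : b - a ≤ 2 * r) :
    b - a ≤ 2 * ‖X b - X a‖ := by
  set m := (a + b) / 2 with hm_def
  have hm : m ∈ Icc a b := ⟨by linarith, by linarith⟩
  have hX'' : ∀ s ∈ Icc a b, ‖deriv (deriv X) s‖ ≤ r⁻¹ := fun s hs => by
    rw [norm_deriv_deriv_eq_abs_curvature hX hunit, ← mul_one r⁻¹, le_inv_mul_iff₀ hr]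
    exact mul_abs_curvature_le_one hX hunit hab hinj hs
  have hturn : ∀ s ∈ Icc a b, ‖deriv X s - deriv X m‖ ≤ 1 := fun s hs =>
    calc ‖deriv X s - deriv X m‖ ≤ r⁻¹ * ‖s - m‖ :=
          (convex_Icc a b).norm_image_sub_le_of_norm_deriv_le
            (fun u _ => (hasDerivAt_deriv_deriv hX u).differentiableAt) hX'' hm hs
      _ ≤ r⁻¹ * r := by
          gcongr
          rw [Real.norm_eq_abs, abs_le]
          constructor <;> linarith [hs.1, hs.2]
      _ = 1 := inv_mul_cancel₀ hr.ne'
  have := mul_sub_le_norm_sub_of_le_inner_deriv (hX.differentiable two_ne_zero) (hunit m).le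
    hab.le fun s hs => half_le_inner_of_norm_sub_le_one (hunit s) (hunit m) (hturn s hs)
  linarith

/-- Lemma B.1 of the paper: a curve segment possessing an `r`-tubular
neighborhood, with arc length at most `2r` and chord of length at most `r`,
has arc length at most twice its chord length. -/
theorem stmt5 (X : ℝ → EuclideanSpace ℝ (Fin 2))
    (hX : ContDiff ℝ 2 X) (hunit : ∀ s : ℝ, ‖deriv X s‖ = 1)
    (a b r : ℝ) (hab : a < b) (hr : 0 < r)
    (hinj : Set.InjOn (fun p : ℝ × ℝ => X p.1 + p.2 • rot (deriv X p.1))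
      (Set.Icc a b ×ˢ Set.Ioo (-r) r))
    (hlen : b - a ≤ 2 * r)
    (hchord : ‖X b - X a‖ ≤ r) :
    b - a ≤ 2 * ‖X b - X a‖ :=
  stmt5_general X hX hunit a b r hab hr hinj hlen
end

section
/- Let X : ℝ → ℝ² be a twice continuously differentiable curve with ‖X'(s)‖ = 1 for all s, let a < b and r > 0, and suppose that the normal map Φ(s,t) = X(s) + t·R(X'(s)) is injective on [a,b] × (−r, r). Then the curvature is bounded by the reciprocal of the tubular radius: ‖X''(s)‖ ≤ 1/r for every s ∈ [a,b]. (The fact, used by the paper, that the tubular-neighborhood radius r satisfies r ≤ 1/κ, where κ is the maximum curvature.) -/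
/-!
Suppose the curvature `κ = ‖X''(s₀)‖` exceeds `1/r` and pick `1/κ < u < r`. Let `ν` be the unit
normal at `s₀` pointing towards the centre of curvature. The function
`g t s = ⟪X s₀ + t • ν - X s, X' s⟫` vanishes at `s = s₀` with `∂ₛ g = t κ - 1`, so for `s ≠ s₀`
close to `s₀` the values `g 0 s` and `g u s` have opposite signs, and by the intermediate value
theorem the normal line at `s` crosses the segment `{X s₀ + t • ν | 0 < t < u}`. The crossing point
lies within distance `r` of both `X s₀` and `X s`, hence has two preimages under the normal map.
-/

open Filter Topology Set

local notation "⟪" x ", " y "⟫" => @inner ℝ _ _ x y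

lemma exists_mem_Ioo_eq_zero_of_mul_neg {f : ℝ → ℝ} {a b : ℝ} (hab : a ≤ b)
    (hf : ContinuousOn f (Icc a b)) (h : f a * f b < 0) : ∃ c ∈ Ioo a b, f c = 0 := by
  rcases mul_neg_iff.mp h with ⟨ha, hb⟩ | ⟨ha, hb⟩
  · exact intermediate_value_Ioo' hab hf ⟨hb, ha⟩
  · exact intermediate_value_Ioo hab hf ⟨ha, hb⟩

lemma eventually_mul_neg_of_hasDerivAt {f g : ℝ → ℝ} {f' g' x : ℝ} (hf : HasDerivAt f f' x)
    (hg : HasDerivAt g g' x) (hfx : f x = 0) (hgx : g x = 0) (h : f' * g' < 0) :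
    ∀ᶠ y in 𝓝[≠] x, f y * g y < 0 := by
  have hslopes : ∀ᶠ y in 𝓝[≠] x, slope f x y * slope g x y < 0 :=
    ((hasDerivAt_iff_tendsto_slope.mp hf).mul (hasDerivAt_iff_tendsto_slope.mp hg)).eventually
      (gt_mem_nhds h)
  filter_upwards [hslopes, self_mem_nhdsWithin] with y hy hyx
  have hfy : f y = (y - x) * slope f x y := by simpa [hfx] using (sub_smul_slope f x y).symm
  have hgy : g y = (y - x) * slope g x y := by simpa [hgx] using (sub_smul_slope g x y).symm
  have hsq : 0 < (y - x) ^ 2 := sq_pos_iff.mpr (sub_ne_zero.mpr hyx)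
  calc f y * g y = (y - x) ^ 2 * (slope f x y * slope g x y) := by rw [hfy, hgy]; ring
    _ < 0 := mul_neg_of_pos_of_neg hsq hy

section InnerProductSpace

variable {E : Type*} [NormedAddCommGroup E] [InnerProductSpace ℝ E]

lemma HasDerivAt.inner_eq_zero_of_norm_eq_one {T : ℝ → E} {T' : E} {s : ℝ}
    (hT : HasDerivAt T T' s) (hunit : ∀ s, ‖T s‖ = 1) : ⟪T s, T'⟫ = 0 := by
  have h := hT.norm_sq
  simp only [hunit, one_pow] at h
  simpa using (hasDerivAt_const s (1 : ℝ)).unique h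

theorem eventually_exists_common_normal_point {X T : ℝ → E} {T' : E} {s₀ r : ℝ}
    (hX : HasDerivAt X (T s₀) s₀) (hT : HasDerivAt T T' s₀) (hunit : ‖T s₀‖ = 1)
    (horth : ⟪T s₀, T'⟫ = 0) (hr : 0 < r) (hκ : r⁻¹ < ‖T'‖) :
    ∀ᶠ s in 𝓝[≠] s₀, ∃ p : E, ⟪p - X s₀, T s₀⟫ = 0 ∧ ‖p - X s₀‖ < r ∧
      ⟪p - X s, T s⟫ = 0 ∧ ‖p - X s‖ < r := by
  have hκpos : 0 < ‖T'‖ := (inv_pos.mpr hr).trans hκ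
  set ν := ‖T'‖⁻¹ • T'
  have hν : ‖ν‖ = 1 := by simp [ν, norm_smul, hκpos.ne']
  have hνT : ⟪ν, T s₀⟫ = 0 := by rw [real_inner_smul_left, real_inner_comm, horth, mul_zero]
  have hνT' : ⟪ν, T'⟫ = ‖T'‖ := by
    rw [real_inner_smul_left, real_inner_self_eq_norm_sq]; field_simp
  obtain ⟨u, hκu, hur⟩ := exists_between ((inv_lt_comm₀ hr hκpos).mp hκ)
  have hu : 0 < u := (inv_pos.mpr hκpos).trans hκu
  set g : ℝ → ℝ → ℝ := fun t s => ⟪X s₀ + t • ν - X s, T s⟫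
  have hg_zero (t : ℝ) : g t s₀ = 0 := by simp [g, real_inner_smul_left, hνT]
  have hg_deriv (t : ℝ) : HasDerivAt (g t) (t * ‖T'‖ - 1) s₀ := by
    refine (((hasDerivAt_const s₀ (X s₀ + t • ν)).sub hX).inner ℝ hT).congr_deriv ?_
    simp [real_inner_smul_left, hνT', hunit, sub_eq_add_neg]
  have hsign : ∀ᶠ s in 𝓝[≠] s₀, g 0 s * g u s < 0 :=
    eventually_mul_neg_of_hasDerivAt (hg_deriv 0) (hg_deriv u) (hg_zero 0) (hg_zero u)
      (by nlinarith [(inv_lt_iff_one_lt_mul₀' hκpos).mp hκu])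
  have hnear : ∀ᶠ s in 𝓝[≠] s₀, ‖X s - X s₀‖ < r - u :=
    nhdsWithin_le_nhds ((hX.continuousAt.sub_const (X s₀)).norm.eventually
      (gt_mem_nhds (by simpa using hur)))
  filter_upwards [hsign, hnear] with s hs hXs
  obtain ⟨t, ⟨ht0, htu⟩, hgt⟩ := exists_mem_Ioo_eq_zero_of_mul_neg
    (f := fun t => g t s) hu.le (by simp only [g]; fun_prop) hs
  have htν : ‖t • ν‖ = t := by rw [norm_smul, hν, mul_one, Real.norm_of_nonneg ht0.le]
  refine ⟨X s₀ + t • ν, hg_zero t, ?_, hgt, ?_⟩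
  · rw [add_sub_cancel_left, htν]
    linarith
  · calc ‖X s₀ + t • ν - X s‖ = ‖t • ν - (X s - X s₀)‖ := by congr 1; abel
      _ ≤ ‖t • ν‖ + ‖X s - X s₀‖ := norm_sub_le _ _
      _ < r := by linarith

end InnerProductSpace

lemma rot_apply_zero_s6 (a : EuclideanSpace ℝ (Fin 2)) : rot a 0 = -a 1 := rfl

lemma rot_apply_one_s6 (a : EuclideanSpace ℝ (Fin 2)) : rot a 1 = a 0 := rfl

lemma norm_rot (a : EuclideanSpace ℝ (Fin 2)) : ‖rot a‖ = ‖a‖ := by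
  simp [EuclideanSpace.norm_eq, Fin.sum_univ_two, rot_apply_zero_s6, rot_apply_one_s6, add_comm]

lemma eq_inner_rot_smul_rot_of_inner_eq_zero {e v : EuclideanSpace ℝ (Fin 2)} (he : ‖e‖ = 1)
    (hv : ⟪v, e⟫ = 0) : v = ⟪v, rot e⟫ • rot e := by
  have he' : ⟪e, e⟫ = 1 := by rw [real_inner_self_eq_norm_sq, he, one_pow]
  simp only [PiLp.inner_apply, RCLike.inner_apply, conj_trivial, Fin.sum_univ_two] at hv he'
  ext i
  fin_cases i
  · simp only [Fin.zero_eta, PiLp.inner_apply, RCLike.inner_apply, conj_trivial, Fin.sum_univ_two,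
      PiLp.smul_apply, smul_eq_mul, rot_apply_zero_s6, rot_apply_one_s6]
    linear_combination (-(v 0)) * he' + e 0 * hv
  · simp only [Fin.mk_one, PiLp.inner_apply, RCLike.inner_apply, conj_trivial, Fin.sum_univ_two,
      PiLp.smul_apply, smul_eq_mul, rot_apply_zero_s6, rot_apply_one_s6]
    linear_combination (-(v 1)) * he' + e 1 * hv

lemma exists_mem_Ioo_eq_add_smul_rot {x p e : EuclideanSpace ℝ (Fin 2)} {r : ℝ} (he : ‖e‖ = 1)
    (hp : ⟪p - x, e⟫ = 0) (hpr : ‖p - x‖ < r) : ∃ β ∈ Ioo (-r) r, p = x + β • rot e := by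
  refine ⟨⟪p - x, rot e⟫, abs_lt.mp ?_, ?_⟩
  · calc |⟪p - x, rot e⟫| ≤ ‖p - x‖ * ‖rot e‖ := abs_real_inner_le_norm _ _
      _ < r := by rwa [norm_rot, he, mul_one]
  · rw [← eq_inner_rot_smul_rot_of_inner_eq_zero he hp, add_sub_cancel]

/-- The tubular-neighborhood radius bounds the curvature: if the normal map of
a unit-speed `C²` curve is injective on `[a,b] × (-r,r)`, then the curvature
satisfies `‖X''(s)‖ ≤ 1/r` on `[a,b]` (i.e. `r ≤ 1/κ`). -/
theorem stmt6 (X : ℝ → EuclideanSpace ℝ (Fin 2))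
    (hX : ContDiff ℝ 2 X) (hunit : ∀ s : ℝ, ‖deriv X s‖ = 1)
    (a b r : ℝ) (hab : a < b) (hr : 0 < r)
    (hinj : Set.InjOn (fun p : ℝ × ℝ => X p.1 + p.2 • rot (deriv X p.1))
      (Set.Icc a b ×ˢ Set.Ioo (-r) r)) :
    ∀ s ∈ Set.Icc a b, ‖deriv (deriv X) s‖ ≤ 1 / r := by
  intro s₀ hs₀
  by_contra! hκ
  have hXd : HasDerivAt X (deriv X s₀) s₀ := (hX.differentiable (by norm_num) s₀).hasDerivAt
  have hTd : HasDerivAt (deriv X) (deriv (deriv X) s₀) s₀ :=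
    (hX.differentiable_deriv_two s₀).hasDerivAt
  have hacc : ∃ᶠ s in 𝓝[≠] s₀, s ∈ Icc a b :=
    accPt_iff_frequently_nhdsNE.mp <| isPreconnected_Icc.preperfect_of_nontrivial
      ⟨a, left_mem_Icc.2 hab.le, b, right_mem_Icc.2 hab.le, hab.ne⟩ s₀ hs₀
  have hmeet := eventually_exists_common_normal_point hXd hTd (hunit s₀)
    (hTd.inner_eq_zero_of_norm_eq_one hunit) hr (by rwa [← one_div])
  obtain ⟨s₁, ⟨⟨p, hp₀, hpr₀, hp₁, hpr₁⟩, hs₁₀⟩, hs₁⟩ :=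
    ((hmeet.and self_mem_nhdsWithin).and_frequently hacc).exists
  obtain ⟨β₀, hβ₀, hpβ₀⟩ := exists_mem_Ioo_eq_add_smul_rot (hunit s₀) hp₀ hpr₀
  obtain ⟨β₁, hβ₁, hpβ₁⟩ := exists_mem_Ioo_eq_add_smul_rot (hunit s₁) hp₁ hpr₁
  exact hs₁₀ <| congrArg Prod.fst <|
    @hinj (s₁, β₁) ⟨hs₁, hβ₁⟩ (s₀, β₀) ⟨hs₀, hβ₀⟩ (hpβ₁.symm.trans hpβ₀)
end
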